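/- System R₀ satisfies subject expansion: if Γ ⊢ t' : τ is derivable and t →β t', then Γ ⊢ t : τ is derivable. -/

import Mathlib

inductive Term : Type
  | var : ℕ → Term
  | lam : Term → Term
  | app : Term → Term → Term
  deriving DecidableEq

/-- de Bruijn shifting: `Term.shift d c t` adds `d` to every variable of `t` that is `≥ c`. -/
def Term.shift (d : ℕ) : ℕ → Term → Term
  | c, .var n => if n < c then .var n else .var (n + d)
  | c, .lam t => .lam (Term.shift d (c + 1) t)
  | c, .app t u => .app (Term.shift d c t) (Term.shift d c u)

/-- Capture-avoiding substitution: `Term.subst k s t` substitutes `s` for variable `k` in `t`. -/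
def Term.subst : ℕ → Term → Term → Term
  | k, s, .var n => if n < k then .var n else if n = k then Term.shift k 0 s else .var (n - 1)
  | k, s, .lam b => .lam (Term.subst (k + 1) s b)
  | k, s, .app t u => .app (Term.subst k s t) (Term.subst k s u)

/-- One-step β-reduction. -/
inductive Beta : Term → Term → Prop
  | beta (b a : Term) : Beta (.app (.lam b) a) (Term.subst 0 a b)
  | appL {t t'} (u : Term) : Beta t t' → Beta (.app t u) (.app t' u)
  | appR (t : Term) {u u'} : Beta u u' → Beta (.app t u) (.app t u')
  | lam {t t'} : Beta t t' → Beta (.lam t) (.lam t')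

/-- Types of the non-idempotent intersection type system R₀:
`τ ::= o | M → τ` where `M` is a finite multiset of types (represented as a list). -/
inductive RTy : Type
  | atom : ℕ → RTy
  | arr : List RTy → RTy → RTy

/-- Contexts map (de Bruijn) variables to finite multisets of types. -/
abbrev RCtx : Type := ℕ → Multiset RTy

/-- The relevant context assigning exactly `[τ]` to variable `n` and `[]` elsewhere. -/
def RCtx.single (n : ℕ) (τ : RTy) : RCtx := fun m => if m = n then {τ} else 0

/-- Extend a context with a multiset for the newly bound variable 0. -/
def pushR (Γ : RCtx) (M : Multiset RTy) : RCtx := fun n =>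
  match n with
  | 0 => M
  | n + 1 => Γ n

/-- The Gardner–de Carvalho system R₀ (relevant, non-idempotent intersection types). -/
inductive RTyping : RCtx → Term → RTy → Prop
  | var (n : ℕ) (τ : RTy) : RTyping (RCtx.single n τ) (.var n) τ
  | abs {Γ t τ} (M : List RTy) :
      RTyping (pushR Γ (↑M : Multiset RTy)) t τ → RTyping Γ (.lam t) (.arr M τ)
  | app {Γ t u τ} (M : List RTy) (Δs : List (RCtx × RTy)) :
      RTyping Γ t (.arr M τ) → Δs.map Prod.snd = M →
      (∀ p ∈ Δs, RTyping p.1 u p.2) →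
      RTyping (Γ + (Δs.map Prod.fst).sum) (.app t u) τ

/-!
The congruence cases of β-reduction are immediate, so everything rests on the redex `(λb) a`,
i.e. on the converse of the substitution lemma: a typing of `b[a/x]` splits into a typing of `b`
in which `x` receives some multiset `M`, together with one typing of `a` for each element of `M`,
the contexts adding up exactly to the original one (relevance and non-idempotence leave no room
for weakening or contraction). This is proved by induction on `b`. With de Bruijn indices the
substituted `a` is shifted under binders, so the variable case needs the analogous inversion of
shifting: a typing of a shifted term is the shift of a typing of the term itself.
-/

lemma pushR_add (Γ Δ : RCtx) (M N : Multiset RTy) :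
    pushR Γ M + pushR Δ N = pushR (Γ + Δ) (M + N) := by
  funext n; cases n <;> rfl

lemma exists_pushR_eq (Γ : RCtx) : ∃ Δ M, pushR Δ M = Γ :=
  ⟨fun n => Γ (n + 1), Γ 0, funext fun n => by cases n <;> rfl⟩

lemma pushR_inj {Γ Δ : RCtx} {M N : Multiset RTy} (h : pushR Γ M = pushR Δ N) :
    Γ = Δ ∧ M = N :=
  ⟨funext fun n => congrFun h (n + 1), congrFun h 0⟩

namespace RCtx

/-- The context counterpart of `Term.shift d c`: `d` empty slots are inserted at position `c`. -/
def shift (d c : ℕ) : RCtx →+ RCtx where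
  toFun Δ n := if n < c then Δ n else if n < c + d then 0 else Δ (n - d)
  map_zero' := by funext n; simp
  map_add' Γ Δ := by funext n; simp only [Pi.add_apply]; split_ifs <;> simp

lemma shift_apply (d c : ℕ) (Δ : RCtx) (n : ℕ) :
    shift d c Δ n = if n < c then Δ n else if n < c + d then 0 else Δ (n - d) := rfl

/-- The context `Γ; x_k : M`, with the variables from `k` on moved up by one. -/
def insert (k : ℕ) (M : Multiset RTy) (Γ : RCtx) : RCtx :=
  fun n => if n < k then Γ n else if n = k then M else Γ (n - 1)

lemma shift_zero (c : ℕ) (Δ : RCtx) : shift 0 c Δ = Δ := by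
  funext n; simp only [shift_apply]; split_ifs <;> first | rfl | omega

lemma shift_single (d c n : ℕ) (τ : RTy) :
    shift d c (single n τ) = single (if n < c then n else n + d) τ := by
  funext m; simp only [shift_apply, single]; split_ifs <;> first | rfl | omega

lemma shift_succ_pushR (d c : ℕ) (Δ : RCtx) (M : Multiset RTy) :
    shift d (c + 1) (pushR Δ M) = pushR (shift d c Δ) M := by
  funext n
  rcases n with _ | n
  · rfl
  · simp only [shift_apply, pushR]
    split_ifs <;> first | rfl | omega | rw [Nat.sub_add_comm (by omega)]

lemma shift_succ_zero (d : ℕ) (Δ : RCtx) : shift (d + 1) 0 Δ = pushR (shift d 0 Δ) 0 := by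
  funext n
  rcases n with _ | n
  · rfl
  · simp only [shift_apply, pushR]; split_ifs <;> first | rfl | omega | (congr 1; omega)

lemma insert_add (k : ℕ) (M N : Multiset RTy) (Γ Δ : RCtx) :
    insert k (M + N) (Γ + Δ) = insert k M Γ + insert k N Δ := by
  funext n; simp only [insert, Pi.add_apply]; split_ifs <;> rfl

lemma insert_zero_zero (k : ℕ) : insert k 0 0 = 0 := by
  funext n; simp [insert]

lemma insert_zero (M : Multiset RTy) (Γ : RCtx) : insert 0 M Γ = pushR Γ M := by
  funext n; cases n <;> simp [insert, pushR]

lemma insert_succ_pushR (k : ℕ) (M N : Multiset RTy) (Γ : RCtx) :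
    insert (k + 1) M (pushR Γ N) = pushR (insert k M Γ) N := by
  funext n
  rcases n with _ | _ | n <;> simp only [insert, pushR] <;> split_ifs <;> first | rfl | omega

lemma insert_single_of_lt {k n : ℕ} (h : n < k) (τ : RTy) :
    insert k 0 (single n τ) = single n τ := by
  funext m; simp only [insert, single]; split_ifs <;> first | rfl | omega

lemma insert_single_pred {k n : ℕ} (h : k < n) (τ : RTy) :
    insert k 0 (single (n - 1) τ) = single n τ := by
  funext m; simp only [insert, single]; split_ifs <;> first | rfl | omega

lemma insert_singleton_zero (k : ℕ) (τ : RTy) : insert k {τ} 0 = single k τ := by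
  funext m; simp only [insert, single]; split_ifs <;> first | rfl | omega

end RCtx

/-- `RTypings Δ u M`: `Δ = Σᵢ Δᵢ` with `Δᵢ ⊢ u : σᵢ`, where `M = [σᵢ]ᵢ`; the premises of the
application rule. -/
inductive RTypings : RCtx → Term → List RTy → Prop
  | nil (u : Term) : RTypings 0 u []
  | cons {Γ Δ u σ M} : RTyping Γ u σ → RTypings Δ u M → RTypings (Γ + Δ) u (σ :: M)

namespace RTypings

lemma append {Γ Δ : RCtx} {u : Term} {M N : List RTy} (hM : RTypings Γ u M)
    (hN : RTypings Δ u N) : RTypings (Γ + Δ) u (M ++ N) := by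
  induction hM with
  | nil => simpa using hN
  | cons hσ _ ih => simpa [add_assoc] using cons hσ (ih hN)

lemma iff_exists_list {Δ : RCtx} {u : Term} {M : List RTy} :
    RTypings Δ u M ↔ ∃ Δs : List (RCtx × RTy), Δs.map Prod.snd = M ∧
      (∀ p ∈ Δs, RTyping p.1 u p.2) ∧ (Δs.map Prod.fst).sum = Δ := by
  constructor
  · intro h
    induction h with
    | nil => exact ⟨[], rfl, by simp, rfl⟩
    | @cons Γ Δ u σ M hσ _ ih =>
      obtain ⟨Δs, rfl, hΔs, rfl⟩ := ih
      refine ⟨(Γ, σ) :: Δs, rfl, ?_, rfl⟩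
      simpa [hσ] using hΔs
  · rintro ⟨Δs, rfl, hΔs, rfl⟩
    induction Δs with
    | nil => exact nil u
    | cons p Δs ih =>
      simp only [List.mem_cons, forall_eq_or_imp] at hΔs
      exact cons hΔs.1 (ih hΔs.2)

end RTypings

lemma RTyping.app_iff {Γ : RCtx} {t u : Term} {τ : RTy} :
    RTyping Γ (.app t u) τ ↔
      ∃ Γt Δ M, RTyping Γt t (.arr M τ) ∧ RTypings Δ u M ∧ Γ = Γt + Δ := by
  constructor
  · rintro (_ | _ | ⟨M, Δs, ht, hM, hu⟩)
    exact ⟨_, _, M, ht, RTypings.iff_exists_list.2 ⟨Δs, hM, hu, rfl⟩, rfl⟩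
  · rintro ⟨Γt, Δ, M, ht, hu, rfl⟩
    obtain ⟨Δs, hM, hΔs, rfl⟩ := RTypings.iff_exists_list.1 hu
    exact .app M Δs ht hM hΔs

lemma RTypings.exists_preimage {u v : Term} (f : RCtx →+ RCtx)
    (H : ∀ {Γ σ}, RTyping Γ v σ → ∃ Δ, Γ = f Δ ∧ RTyping Δ u σ) {Γ : RCtx} {M : List RTy}
    (h : RTypings Γ v M) : ∃ Δ, Γ = f Δ ∧ RTypings Δ u M := by
  induction h with
  | nil => exact ⟨0, (map_zero f).symm, .nil u⟩
  | cons hσ _ ih =>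
    obtain ⟨Δ₁, rfl, h₁⟩ := H hσ
    obtain ⟨Δ₂, rfl, h₂⟩ := ih H
    exact ⟨Δ₁ + Δ₂, (map_add f _ _).symm, .cons h₁ h₂⟩

theorem RTyping.of_shift {d : ℕ} : ∀ {u : Term} {c : ℕ} {Γ : RCtx} {τ : RTy},
    RTyping Γ (Term.shift d c u) τ → ∃ Δ, Γ = RCtx.shift d c Δ ∧ RTyping Δ u τ
  | .var n, c, Γ, τ, h => by
    refine ⟨RCtx.single n τ, ?_, .var n τ⟩
    rw [RCtx.shift_single]
    unfold Term.shift at h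
    split_ifs at h with hc <;> cases h <;> simp [hc]
  | .lam b, c, Γ, _, h => by
    cases h with | abs M hb =>
    obtain ⟨Δ, hΔ, hb⟩ := of_shift hb
    obtain ⟨Δ, m, rfl⟩ := exists_pushR_eq Δ
    rw [RCtx.shift_succ_pushR] at hΔ
    obtain ⟨rfl, rfl⟩ := pushR_inj hΔ
    exact ⟨Δ, rfl, .abs M hb⟩
  | .app t u, c, Γ, τ, h => by
    obtain ⟨Γt, Δu, M, ht, hu, rfl⟩ := RTyping.app_iff.1 h
    obtain ⟨Et, rfl, ht'⟩ := of_shift ht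
    obtain ⟨Eu, rfl, hu'⟩ := hu.exists_preimage (RCtx.shift d c) of_shift
    exact ⟨Et + Eu, (map_add _ _ _).symm, RTyping.app_iff.2 ⟨_, _, _, ht', hu', rfl⟩⟩

lemma RTypings.of_subst {k : ℕ} {s u : Term}
    (H : ∀ {Γ σ}, RTyping Γ (Term.subst k s u) σ →
      ∃ Γ₀ M Δ, RTypings Δ s M ∧ RTyping (RCtx.insert k ↑M Γ₀) u σ ∧ Γ = Γ₀ + RCtx.shift k 0 Δ)
    {Γ : RCtx} {N : List RTy} (h : RTypings Γ (Term.subst k s u) N) :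
    ∃ Γ₀ M Δ, RTypings Δ s M ∧ RTypings (RCtx.insert k ↑M Γ₀) u N ∧
      Γ = Γ₀ + RCtx.shift k 0 Δ := by
  generalize hv : Term.subst k s u = v at h
  induction h with
  | nil => exact ⟨0, [], 0, .nil s, by simpa [RCtx.insert_zero_zero] using .nil u, by simp⟩
  | cons hσ _ ih =>
    subst hv
    obtain ⟨Γ₁, M₁, Δ₁, hs₁, hu₁, rfl⟩ := H hσ
    obtain ⟨Γ₂, M₂, Δ₂, hs₂, hu₂, rfl⟩ := ih rfl
    refine ⟨Γ₁ + Γ₂, M₁ ++ M₂, Δ₁ + Δ₂, hs₁.append hs₂, ?_, ?_⟩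
    · rw [← Multiset.coe_add, RCtx.insert_add]
      exact .cons hu₁ hu₂
    · rw [map_add]; abel

theorem RTyping.of_subst {s : Term} : ∀ {r : Term} {k : ℕ} {Γ : RCtx} {τ : RTy},
    RTyping Γ (Term.subst k s r) τ →
    ∃ Γ₀ M Δ, RTypings Δ s M ∧ RTyping (RCtx.insert k ↑M Γ₀) r τ ∧ Γ = Γ₀ + RCtx.shift k 0 Δ
  | .var n, k, Γ, τ, h => by
    unfold Term.subst at h
    split_ifs at h with hlt heq
    · cases h
      exact ⟨.single n τ, [], 0, .nil s, by simpa [RCtx.insert_single_of_lt hlt] using .var n τ,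
        by simp⟩
    · obtain ⟨Δ, rfl, hs⟩ := of_shift h
      subst heq
      exact ⟨0, [τ], Δ, by simpa using RTypings.cons hs (.nil s),
        by simpa [RCtx.insert_singleton_zero] using .var n τ, by simp⟩
    · cases h
      exact ⟨.single (n - 1) τ, [], 0, .nil s,
        by simpa [RCtx.insert_single_pred (by omega : k < n)] using .var n τ, by simp⟩
  | .lam b, k, Γ, _, h => by
    cases h with | abs N hb =>
    obtain ⟨Γ₀, M, Δ, hs, hb', hΓ⟩ := of_subst hb
    obtain ⟨Γ₀, m, rfl⟩ := exists_pushR_eq Γ₀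
    rw [RCtx.shift_succ_zero, pushR_add, add_zero] at hΓ
    obtain ⟨rfl, rfl⟩ := pushR_inj hΓ
    rw [RCtx.insert_succ_pushR] at hb'
    exact ⟨Γ₀, M, Δ, hs, .abs N hb', rfl⟩
  | .app t u, k, Γ, τ, h => by
    obtain ⟨Γt, Γu, N, ht, hu, rfl⟩ := RTyping.app_iff.1 h
    obtain ⟨Γ₀t, Mt, Δt, hst, ht', rfl⟩ := of_subst ht
    obtain ⟨Γ₀u, Mu, Δu, hsu, hu', rfl⟩ := hu.of_subst of_subst
    refine ⟨Γ₀t + Γ₀u, Mt ++ Mu, Δt + Δu, hst.append hsu, ?_, ?_⟩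
    · rw [← Multiset.coe_add, RCtx.insert_add]
      exact RTyping.app_iff.2 ⟨_, _, _, ht', hu', rfl⟩
    · rw [map_add]; abel

/-- Subject expansion for system R₀. -/
theorem R0_subject_expansion {Γ : RCtx} {t t' : Term} {τ : RTy}
    (h : RTyping Γ t' τ) (hb : Beta t t') : RTyping Γ t τ := by
  induction hb generalizing Γ τ with
  | beta b a =>
    obtain ⟨Γ₀, M, Δ, ha, hb, rfl⟩ := RTyping.of_subst h
    rw [RCtx.insert_zero] at hb
    rw [RCtx.shift_zero]
    exact RTyping.app_iff.2 ⟨Γ₀, Δ, M, .abs M hb, ha, rfl⟩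
  | appL u _ ih =>
    cases h with
    | app M Δs ht hM hu => exact .app M Δs (ih ht) hM hu
  | appR t _ ih =>
    cases h with
    | app M Δs ht hM hu => exact .app M Δs ht hM fun p hp => ih (hu p hp)
  | lam _ ih =>
    cases h with
    | abs M ht => exact .abs M (ih ht)
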